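/- arXiv:1909.08433 — 2 statements merged into one kernel-verified Lean document; each statement's English description precedes it below -/
import Mathlib

section
/- In the free category on a directed graph G modulo the congruence generated by a set R of relations (pairs of parallel paths of length ≤ 2 through distinct intermediate vertices), if W ⊆ V is path-closed (every directed path between vertices of W lies entirely in W) and relation-closed (every relating 2-cell with source and target in W lies in W), then the induced functor from the quotient of the free category on the full subgraph G|_W to the quotient of the free category on G is fully faithful. -/
open CategoryTheory

universe u

/-- The set of vertices visited by a path in a quiver. -/
def pathVerts {V : Type u} [Quiver.{u + 1} V] :
    ∀ {a b : V}, Quiver.Path a b → Set V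
  | a, _, Quiver.Path.nil => {a}
  | _, b, Quiver.Path.cons p _ => pathVerts p ∪ {b}

/-- The full subquiver of a quiver on a set `W` of vertices. -/
instance fullSubquiver {V : Type u} [Quiver.{u + 1} V] (W : Set V) : Quiver ↥W :=
  ⟨fun a b => (a : V) ⟶ (b : V)⟩

/-- The inclusion prefunctor of a full subquiver. -/
def fullSubquiverIncl {V : Type u} [Quiver.{u + 1} V] (W : Set V) :
    ↥W ⥤q V :=
  { obj := Subtype.val, map := fun f => f }

/-- The induced functor on free (path) categories. -/
def pathsIncl {V : Type u} [Quiver.{u + 1} V] (W : Set V) :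
    Paths ↥W ⥤ Paths V :=
  Paths.lift ((fullSubquiverIncl W).comp (Paths.of V))

/-- The pullback of a relation on the path category of `V` to the path
category of the full subquiver on `W`. -/
def restrictedRel {V : Type u} [Quiver.{u + 1} V] (W : Set V)
    (R : HomRel (Paths V)) :
    HomRel (Paths ↥W) :=
  fun _ _ f g => R ((pathsIncl W).map f) ((pathsIncl W).map g)

/-!
A path between two vertices of a path-closed set `W` never leaves `W`, so it lifts uniquely to a
path of the full subgraph: the inclusion of free categories is fully faithful. Moreover any object
through which a morphism between objects of `W` factors lies in `W`, so every elementary step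
`p ≫ m₁ ≫ q ~ p ≫ m₂ ≫ q` of a chain of relations between two paths in `W` is the image of a step
in the full subgraph; hence the congruence generated by `R` restricts to the congruence generated
by the restricted relations.
-/

namespace CategoryTheory

variable {C D : Type*} [Category C] [Category D]

theorem Quotient.full_lift_comp_functor (F : C ⥤ D) [F.Full] (S : HomRel C) (R : HomRel D)
    (H : ∀ (X Y : C) (f g : X ⟶ Y), S f g → (F ⋙ functor R).map f = (F ⋙ functor R).map g) :
    (lift S (F ⋙ functor R) H).Full where
  map_surjective := by
    rintro ⟨X⟩ ⟨Y⟩ ⟨f⟩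
    obtain ⟨g, rfl⟩ := F.map_surjective f
    exact ⟨(functor S).map g, rfl⟩

section

variable {F : C ⥤ D} (hF : F.FullyFaithful)
  (hobj : ∀ {X Y : C} {Z : D}, (F.obj X ⟶ Z) → (Z ⟶ F.obj Y) → ∃ Z', F.obj Z' = Z)
  {S : HomRel C} {R : HomRel D} (hS : ∀ {X Y : C} (f g : X ⟶ Y), R (F.map f) (F.map g) → S f g)
include hF hobj hS

theorem Functor.FullyFaithful.eqvGen_compClosure_preimage {X Y : C} {u v : F.obj X ⟶ F.obj Y}
    (h : Relation.EqvGen (@HomRel.CompClosure D _ R _ _) u v) :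
    Relation.EqvGen (@HomRel.CompClosure C _ S X Y) (hF.preimage u) (hF.preimage v) := by
  induction h with
  | rel u v huv =>
    obtain ⟨_, _, p, m₁, m₂, q, hm⟩ := huv
    obtain ⟨Z₁, rfl⟩ := hobj p (m₁ ≫ q)
    obtain ⟨Z₂, rfl⟩ := hobj (p ≫ m₁) q
    simp only [hF.preimage_comp]
    exact .rel _ _ (.intro _ _ _ _ _ _ (hS _ _ (by simpa using hm)))
  | refl => exact .refl _
  | symm _ _ _ ih => exact .symm _ _ ih
  | trans _ _ _ _ _ ih₁ ih₂ => exact .trans _ _ _ ih₁ ih₂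

theorem Quotient.faithful_lift_comp_functor
    (H : ∀ (X Y : C) (f g : X ⟶ Y), S f g → (F ⋙ functor R).map f = (F ⋙ functor R).map g) :
    (lift S (F ⋙ functor R) H).Faithful where
  map_injective := by
    rintro ⟨X⟩ ⟨Y⟩ ⟨f⟩ ⟨g⟩ h
    have hfg := hF.eqvGen_compClosure_preimage hobj hS (Quot.eq.1 h)
    rw [hF.preimage_map, hF.preimage_map] at hfg
    exact Quot.eqvGen_sound hfg

end

end CategoryTheory

section PathClosed

variable {V : Type u} [Quiver.{u + 1} V]

def IsPathClosed (W : Set V) : Prop :=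
  ∀ a b : V, a ∈ W → b ∈ W → ∀ p : Quiver.Path a b, pathVerts p ⊆ W

@[simp]
theorem pathVerts_nil (a : V) : pathVerts (Quiver.Path.nil : Quiver.Path a a) = {a} := by
  rw [pathVerts]

@[simp]
theorem pathVerts_cons {a b c : V} (p : Quiver.Path a b) (e : b ⟶ c) :
    pathVerts (p.cons e) = pathVerts p ∪ {c} := by
  rw [pathVerts]

theorem pathVerts_subset_cons {a b c : V} (p : Quiver.Path a b) (e : b ⟶ c) :
    pathVerts p ⊆ pathVerts (p.cons e) := by
  simp

theorem target_mem_pathVerts : ∀ {a b : V} (p : Quiver.Path a b), b ∈ pathVerts p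
  | _, _, .nil => by simp
  | _, _, .cons _ _ => by simp

theorem mem_pathVerts_comp {a b c : V} (p : Quiver.Path a b) :
    ∀ q : Quiver.Path b c, b ∈ pathVerts (p.comp q)
  | .nil => target_mem_pathVerts p
  | .cons q e => pathVerts_subset_cons _ e (mem_pathVerts_comp p q)

variable (W : Set V)

def liftPath {a : V} (ha : a ∈ W) : ∀ {b : V} (p : Quiver.Path a b) (hp : pathVerts p ⊆ W),
    Quiver.Path (⟨a, ha⟩ : ↥W) ⟨b, hp (target_mem_pathVerts p)⟩
  | _, .nil, _ => .nil
  | _, .cons p e, hp => .cons (liftPath ha p fun _ hx => hp (pathVerts_subset_cons p e hx)) e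

theorem pathsIncl_map_liftPath {a : V} (ha : a ∈ W) :
    ∀ {b : V} (p : Quiver.Path a b) (hp : pathVerts p ⊆ W),
      (pathsIncl W).map (liftPath W ha p hp) = p
  | _, .nil, _ => rfl
  | _, .cons p e, _ => congrArg (Quiver.Path.cons · e) (pathsIncl_map_liftPath ha p _)

theorem liftPath_pathsIncl_map {a : ↥W} : ∀ {b : ↥W} (p : Quiver.Path a b)
    (hp : pathVerts ((pathsIncl W).map p) ⊆ W), liftPath W a.2 ((pathsIncl W).map p) hp = p
  | _, .nil, _ => rfl
  | _, .cons p e, _ => congrArg (Quiver.Path.cons · e) (liftPath_pathsIncl_map p _)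

def fullyFaithfulPathsIncl {W : Set V} (hW : IsPathClosed W) : (pathsIncl W).FullyFaithful where
  preimage {a b} p := liftPath W a.2 p (hW _ _ a.2 b.2 p)
  map_preimage _ := pathsIncl_map_liftPath W _ _ _
  preimage_map _ := liftPath_pathsIncl_map W _ _

end PathClosed

theorem full_subgraph_quotient_fullyFaithful_general {V : Type u} [Quiver.{u + 1} V]
    (R : HomRel (Paths V)) (W : Set V)
    (hpathClosed : ∀ (a b : V), a ∈ W → b ∈ W →
      ∀ p : Quiver.Path a b, pathVerts p ⊆ W) :
    (CategoryTheory.Quotient.lift (restrictedRel W R)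
        ((pathsIncl W) ⋙ CategoryTheory.Quotient.functor R)
        (fun _ _ f g h => CategoryTheory.Quotient.sound R h)).Full ∧
    (CategoryTheory.Quotient.lift (restrictedRel W R)
        ((pathsIncl W) ⋙ CategoryTheory.Quotient.functor R)
        (fun _ _ f g h => CategoryTheory.Quotient.sound R h)).Faithful := by
  have hF := fullyFaithfulPathsIncl hpathClosed
  have := hF.full
  refine ⟨Quotient.full_lift_comp_functor _ _ _ _,
    Quotient.faithful_lift_comp_functor hF ?_ (fun _ _ h => h) _⟩
  intro a b c p q
  exact ⟨⟨c, hpathClosed _ _ a.2 b.2 (p ≫ q) (mem_pathVerts_comp p q)⟩, rfl⟩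

/-- Quotient of the free category on the full subgraph on a path-closed,
relation-closed set `W` of vertices maps fully faithfully to the quotient of
the free category on the whole graph. -/
theorem full_subgraph_quotient_fullyFaithful {V : Type u} [Quiver.{u + 1} V]
    (R : HomRel (Paths V)) (W : Set V)
    (hpathClosed : ∀ (a b : V), a ∈ W → b ∈ W →
      ∀ p : Quiver.Path a b, pathVerts p ⊆ W)
    (hrelClosed : ∀ (x y : Paths V) (f g : x ⟶ y), R f g →
      (x : V) ∈ W → (y : V) ∈ W → pathVerts f ⊆ W ∧ pathVerts g ⊆ W) :
    (CategoryTheory.Quotient.lift (restrictedRel W R)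
        ((pathsIncl W) ⋙ CategoryTheory.Quotient.functor R)
        (fun _ _ f g h => CategoryTheory.Quotient.sound R h)).Full ∧
    (CategoryTheory.Quotient.lift (restrictedRel W R)
        ((pathsIncl W) ⋙ CategoryTheory.Quotient.functor R)
        (fun _ _ f g h => CategoryTheory.Quotient.sound R h)).Faithful :=
  full_subgraph_quotient_fullyFaithful_general R W hpathClosed
end

section
/- Let α : 𝒫(Fin m) → 𝒫(Fin n) be an injective monotone map preserving meets, K a subinterval-closed set of intervals in 𝒫(Fin m), and ω : α(A) = F₀ ⊆ F₁ ⊆ ⋯ ⊆ F_k ⊆ F_{k+1} = α(B) a chain in which each consecutive pair Fᵢ ⊆ Fᵢ₊₁ lies in some interval [α(Cᵢ), α(Dᵢ)] with [Cᵢ,Dᵢ] ∈ K. Then with B_F denoting the minimal subset with F ⊆ α(B_F) (among those C with F ⊆ α(C) and C in the appropriate interval data), the chain α(B_{F₀}) ⊆ α(B_{F₁}) ⊆ ⋯ ⊆ α(B_{F_{k+1}}) is well-defined, satisfies B_{F₀} = A and B_{F_{k+1}} = B, and each inclusion α(B_{Fᵢ}) ⊆ α(B_{Fᵢ₊₁})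 is the image under α of the inclusion B_{Fᵢ} ⊆ B_{Fᵢ₊₁}. -/
lemma chain_minimal_lift_inf'_sub {m n : ℕ} (α : Finset (Fin m) → Finset (Fin n))
    (hmeet : ∀ A B : Finset (Fin m), α (A ∩ B) = α A ∩ α B)
    (G : Finset (Fin n)) (S : Finset (Finset (Fin m))) (hS : S.Nonempty)
    (h : ∀ C ∈ S, G ⊆ α C) : G ⊆ α (S.inf' hS id) := by
  revert h
  induction hS using Finset.Nonempty.cons_induction with
  | singleton a => intro h; simpa using h a (by simp)
  | cons a S ha hS ih =>
    intro h
    rw [Finset.inf'_cons]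
    show G ⊆ α (a ∩ S.inf' hS id)
    rw [hmeet]
    exact Finset.subset_inter (h a (by simp)) (ih fun C hC => h C (by simp [hC]))

/-- Given a meet-preserving injective monotone `α : 𝒫(Fin m) → 𝒫(Fin n)`, a
subinterval-closed set `K` of intervals of `𝒫(Fin m)` and a chain
`α A = F₀ ⊆ ⋯ ⊆ F_{k+1} = α B` in which each consecutive inclusion lies in an
interval `[α Cᵢ, α Dᵢ]` with `(Cᵢ, Dᵢ) ∈ K`, the assignment `F ↦ B_F` (the
minimal set with `F ⊆ α B_F`) is well-defined, sends `F₀` to `A` and `F_{k+1}`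
to `B`, and is monotone along the chain, so each inclusion
`α B_{Fᵢ} ⊆ α B_{Fᵢ₊₁}` is the image of `B_{Fᵢ} ⊆ B_{Fᵢ₊₁}` under `α`. -/
theorem chain_minimal_lift {m n : ℕ}
    (α : Finset (Fin m) → Finset (Fin n))
    (hinj : Function.Injective α) (hmono : Monotone α)
    (hmeet : ∀ A B : Finset (Fin m), α (A ∩ B) = α A ∩ α B)
    (K : Set (Finset (Fin m) × Finset (Fin m)))
    (hKle : ∀ I ∈ K, I.1 ⊆ I.2)
    (A B : Finset (Fin m)) (k : ℕ)
    (F : Fin (k + 2) → Finset (Fin n))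
    (hF0 : F 0 = α A) (hFlast : F (Fin.last (k + 1)) = α B)
    (hinterval : ∀ i : Fin (k + 1), ∃ CD ∈ K,
      α CD.1 ⊆ F i.castSucc ∧ F i.castSucc ⊆ F i.succ ∧ F i.succ ⊆ α CD.2) :
    ∃ BF : Fin (k + 2) → Finset (Fin m),
      (∀ i, F i ⊆ α (BF i) ∧ ∀ C : Finset (Fin m), F i ⊆ α C → BF i ⊆ C) ∧
      BF 0 = A ∧ BF (Fin.last (k + 1)) = B ∧
      (∀ i : Fin (k + 1), BF i.castSucc ⊆ BF i.succ ∧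
        α (BF i.castSucc) ⊆ α (BF i.succ)) := by
  -- the set of candidates for each j
  set S : Fin (k + 2) → Finset (Finset (Fin m)) :=
    fun j => Finset.univ.filter (fun C => F j ⊆ α C) with hSdef
  have hmemS : ∀ j C, C ∈ S j ↔ F j ⊆ α C := by
    intro j C; simp [hSdef]
  have hne : ∀ j, (S j).Nonempty := by
    intro j
    induction j using Fin.lastCases with
    | last => exact ⟨B, (hmemS _ _).2 (by rw [hFlast])⟩
    | cast i =>
      obtain ⟨CD, _, _, h2, h3⟩ := hinterval i
      exact ⟨CD.2, (hmemS _ _).2 (h2.trans h3)⟩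
  refine ⟨fun j => (S j).inf' (hne j) id, ?_, ?_, ?_, ?_⟩
  · intro j
    constructor
    · exact chain_minimal_lift_inf'_sub α hmeet _ _ _ fun C hC => (hmemS j C).1 hC
    · intro C hC
      exact Finset.inf'_le id ((hmemS j C).2 hC)
  · -- BF 0 = A
    have hAmem : A ∈ S 0 := (hmemS _ _).2 (by rw [hF0])
    have h1 : (S 0).inf' (hne 0) id ⊆ A := Finset.inf'_le id hAmem
    have h2 : α A ⊆ α ((S 0).inf' (hne 0) id) := by
      rw [← hF0]
      exact chain_minimal_lift_inf'_sub α hmeet _ _ _ fun C hC => (hmemS 0 C).1 hC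
    have h3 : A ⊆ (S 0).inf' (hne 0) id := by
      have := hmeet A ((S 0).inf' (hne 0) id)
      have e : α A ∩ α ((S 0).inf' (hne 0) id) = α A := Finset.inter_eq_left.2 h2
      rw [e] at this
      have := hinj this
      exact Finset.inter_eq_left.1 this
    exact Finset.Subset.antisymm h1 h3
  · have hBmem : B ∈ S (Fin.last (k+1)) := (hmemS _ _).2 (by rw [hFlast])
    have h1 : (S _).inf' (hne _) id ⊆ B := Finset.inf'_le id hBmem
    have h2 : α B ⊆ α ((S (Fin.last (k+1))).inf' (hne _) id) := by
      rw [← hFlast]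
      exact chain_minimal_lift_inf'_sub α hmeet _ _ _ fun C hC => (hmemS _ C).1 hC
    have h3 : B ⊆ (S (Fin.last (k+1))).inf' (hne _) id := by
      have := hmeet B ((S (Fin.last (k+1))).inf' (hne _) id)
      have e : α B ∩ α ((S (Fin.last (k+1))).inf' (hne _) id) = α B :=
        Finset.inter_eq_left.2 h2
      rw [e] at this
      exact Finset.inter_eq_left.1 (hinj this)
    exact Finset.Subset.antisymm h1 h3
  · intro i
    obtain ⟨CD, _, _, h2, _⟩ := hinterval i
    have hsub : (S i.castSucc).inf' (hne _) id ⊆ (S i.succ).inf' (hne _) id := by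
      have hmem : (S i.succ).inf' (hne _) id ∈ S i.castSucc := by
        rw [hmemS]
        exact h2.trans
          (chain_minimal_lift_inf'_sub α hmeet _ _ _ fun C hC => (hmemS _ C).1 hC)
      exact Finset.inf'_le id hmem
    exact ⟨hsub, hmono hsub⟩
end
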